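/- Let Q be an n×n real symmetric matrix, N a p×q real matrix, X⁰, δX n×p real matrices, and Y⁰, δY q×n real matrices. If the (n+q)×(n+q) block matrix [[Q + He(X⁰ N Y⁰) + He(δX N Y⁰) + He(X⁰ N δY), δX N + δYᵀ], [Nᵀ δXᵀ + δY, −2·I]] is negative definite, then Q + He((X⁰ + δX) N (Y⁰ + δY)) is negative definite. -/

import Mathlib

/-! Evaluating the block form at `(x, δY x)`, i.e. conjugating the block matrix by the injective
map `[I; δY]`, turns the LMI into `Q + He((X⁰ + δX) N (Y⁰ + δY))`: the off-diagonal blocks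
contribute `He(δX N δY) + 2 δYᵀ δY`, and the `-2 I` block cancels the `2 δYᵀ δY`. -/

open Matrix

/-- `He A = A + Aᵀ`. -/
def He {n : Type*} (A : Matrix n n ℝ) : Matrix n n ℝ := A + Aᵀ

/-- A real symmetric matrix is negative definite if its quadratic form is
negative on all nonzero vectors. -/
def NegDef {n : Type*} [Fintype n] (M : Matrix n n ℝ) : Prop :=
  M.IsSymm ∧ ∀ x : n → ℝ, x ≠ 0 → x ⬝ᵥ M.mulVec x < 0

theorem NegDef.transpose_mul_mul {m n : Type*} [Fintype m] [Fintype n]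
    {M : Matrix m m ℝ} (hM : NegDef M) {L : Matrix m n ℝ}
    (hL : Function.Injective L.mulVec) : NegDef (Lᵀ * M * L) := by
  refine ⟨?_, fun x hx => ?_⟩
  · simp only [IsSymm, transpose_mul, transpose_transpose, hM.1.eq, Matrix.mul_assoc]
  · have hLx : L *ᵥ x ≠ 0 := fun h0 => hx (hL (h0.trans (mulVec_zero L).symm))
    calc x ⬝ᵥ (Lᵀ * M * L) *ᵥ x = L *ᵥ x ⬝ᵥ M *ᵥ (L *ᵥ x) := by
          rw [← mulVec_mulVec, ← mulVec_mulVec, mulVec_transpose, dotProduct_comm,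
            ← dotProduct_mulVec, dotProduct_comm]
      _ < 0 := hM.2 _ hLx

theorem injective_mulVec_fromRows_one {R m n : Type*} [Semiring R] [Fintype m] [DecidableEq m]
    (K : Matrix n m R) : Function.Injective (fromRows (1 : Matrix m m R) K).mulVec := by
  intro x y hxy
  simpa [fromRows_mulVec] using congrArg (fun v => v ∘ Sum.inl) hxy

theorem transpose_fromRows_one_mul_fromBlocks_mul {R m n : Type*} [CommSemiring R]
    [Fintype m] [Fintype n] [DecidableEq m] (A : Matrix m m R) (B : Matrix m n R)
    (C : Matrix n m R) (D : Matrix n n R) (K : Matrix n m R) :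
    (fromRows (1 : Matrix m m R) K)ᵀ * fromBlocks A B C D * fromRows (1 : Matrix m m R) K =
      A + B * K + Kᵀ * C + Kᵀ * D * K := by
  rw [Matrix.mul_assoc, transpose_fromRows, fromBlocks_mul_fromRows, fromCols_mul_fromRows]
  simp [Matrix.mul_add, Matrix.mul_assoc, add_assoc]

theorem stmt_2_general {n p q : ℕ}
    (Q : Matrix (Fin n) (Fin n) ℝ)
    (N : Matrix (Fin p) (Fin q) ℝ)
    (X₀ δX : Matrix (Fin n) (Fin p) ℝ) (Y₀ δY : Matrix (Fin q) (Fin n) ℝ)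
    (h : NegDef (Matrix.fromBlocks
        (Q + He (X₀ * N * Y₀) + He (δX * N * Y₀) + He (X₀ * N * δY))
        (δX * N + δYᵀ)
        (Nᵀ * δXᵀ + δY)
        (-(2 : ℝ) • (1 : Matrix (Fin q) (Fin q) ℝ)))) :
    NegDef (Q + He ((X₀ + δX) * N * (Y₀ + δY))) := by
  have hcongr := h.transpose_mul_mul (injective_mulVec_fromRows_one δY)
  rw [transpose_fromRows_one_mul_fromBlocks_mul] at hcongr
  convert hcongr using 1
  simp only [He, transpose_mul, transpose_add, Matrix.mul_add, Matrix.add_mul, Matrix.mul_assoc,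
    smul_mul, Matrix.one_mul, Matrix.mul_smul]
  module

/-- ICO step (overbounding with `G = I`): if the LMI in the perturbations
`δX, δY` holds, then the perturbed BMI `Q + He((X⁰+δX) N (Y⁰+δY)) ≺ 0` holds. -/
theorem stmt_2 {n p q : ℕ}
    (Q : Matrix (Fin n) (Fin n) ℝ) (hQ : Q.IsSymm)
    (N : Matrix (Fin p) (Fin q) ℝ)
    (X₀ δX : Matrix (Fin n) (Fin p) ℝ) (Y₀ δY : Matrix (Fin q) (Fin n) ℝ)
    (h : NegDef (Matrix.fromBlocks
        (Q + He (X₀ * N * Y₀) + He (δX * N * Y₀) + He (X₀ * N * δY))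
        (δX * N + δYᵀ)
        (Nᵀ * δXᵀ + δY)
        (-(2 : ℝ) • (1 : Matrix (Fin q) (Fin q) ℝ)))) :
    NegDef (Q + He ((X₀ + δX) * N * (Y₀ + δY))) :=
  stmt_2_general Q N X₀ δX Y₀ δY h
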